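/- Let Σ be a set of linear TGDs and I0 an instance. If a Boolean conjunctive query Q has a match h in the final chase tree T of a tree-like chase sequence for I0 and Σ, then there is another tree-like chase sequence for I0 and Σ with final tree T' and a match h' of Q in T' such that whenever a node n is the image parent of a node n' in the augmented image of h', the nodes n and n' are near (i.e., h' is a tight match). -/

import Mathlib

namespace GTGDPaper

/-! ## Basic syntax: atoms, facts, TGDs, CQs -/

/-- An atom: a relation name together with a list of arguments.
Arguments are natural numbers, read as variables in rule atoms
and as domain elements in facts. -/
structure Atom where
  rel : ℕ
  args : List ℕ
deriving DecidableEq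

/-- A fact is an atom whose arguments are read as domain elements. -/
abbrev Fact := Atom

/-- The variables (resp. domain elements) occurring in an atom (resp. fact). -/
def Atom.vars (A : Atom) : Finset ℕ := A.args.toFinset

/-- Apply a substitution to an atom (also used to instantiate atoms into facts and to
rename the elements of facts). -/
def Atom.rename (σ : ℕ → ℕ) (A : Atom) : Atom := ⟨A.rel, A.args.map σ⟩

/-- The active domain of a finite set of facts. -/
def adomF (I : Finset Fact) : Finset ℕ := I.biUnion Atom.vars

/-- A single-headed tuple-generating dependency (TGD):
`∀ x⃗ (body → ∃ y⃗ head)` where the existential variables are the variables of the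
head not occurring in the body. -/
structure TGD where
  body : List Atom
  head : Atom
deriving DecidableEq

def TGD.bodyVars (τ : TGD) : Finset ℕ := τ.body.foldr (fun A s => A.vars ∪ s) ∅

/-- Exported (frontier) variables: the variables occurring both in the body and the head. -/
def TGD.exported (τ : TGD) : Finset ℕ := τ.head.vars ∩ τ.bodyVars

/-- The width of a TGD: its number of exported variables. -/
def TGD.width (τ : TGD) : ℕ := τ.exported.card

/-- The existentially quantified variables of a TGD. -/
def TGD.existVars (τ : TGD) : Finset ℕ := τ.head.vars \ τ.bodyVars

/-- A full TGD: no existentially quantified variable in the head. -/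
def TGD.isFull (τ : TGD) : Prop := τ.head.vars ⊆ τ.bodyVars

/-- A linear TGD: the body is a single atom. -/
def TGD.linear (τ : TGD) : Prop := τ.body.length = 1

/-- `A` is a guard of `τ`: a body atom containing all body variables. -/
def isGuard (τ : TGD) (A : Atom) : Prop := A ∈ τ.body ∧ τ.bodyVars ⊆ A.vars

/-- A guarded TGD (GTGD). -/
def TGD.guarded (τ : TGD) : Prop := ∃ A, isGuard τ A

/-- Satisfaction of a TGD by a (possibly infinite) instance, with active-domain semantics:
every trigger of the body extends to a match of the head. -/
def TGD.holdsIn (τ : TGD) (I : Set Fact) : Prop :=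
  ∀ σ : ℕ → ℕ, (∀ A ∈ τ.body, A.rename σ ∈ I) →
    ∃ σ' : ℕ → ℕ, (∀ v ∈ τ.bodyVars, σ' v = σ v) ∧ τ.head.rename σ' ∈ I

/-- A Boolean conjunctive query: a list of atoms, all of whose variables are
existentially quantified. -/
abbrev CQ := List Atom

/-- A Boolean CQ holds in an instance if it has a match there. -/
def CQholds (Q : CQ) (I : Set Fact) : Prop :=
  ∃ σ : ℕ → ℕ, ∀ A ∈ Q, A.rename σ ∈ I

/-- Open-world query answering entailment, with the theory given as a predicate on TGDs. -/
def entailsQS (I0 : Set Fact) (R : TGD → Prop) (Q : CQ) : Prop :=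
  ∀ J : Set Fact, I0 ⊆ J → (∀ τ, R τ → τ.holdsIn J) → CQholds Q J

/-- `I0, Σ ⊨ Q` : the Boolean CQ `Q` has a match in every superinstance of `I0`
satisfying all TGDs of `Th`. -/
def entailsQ (I0 : Finset Fact) (Th : Finset TGD) (Q : CQ) : Prop :=
  entailsQS ↑I0 (· ∈ Th) Q

/-- `I0, Σ ⊨ F` : the fact `F` belongs to every superinstance of `I0` satisfying `Th`. -/
def entailsF (I0 : Finset Fact) (Th : Finset TGD) (F : Fact) : Prop :=
  ∀ J : Set Fact, ↑I0 ⊆ J → (∀ τ ∈ Th, τ.holdsIn J) → F ∈ J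

/-- Logical entailment of a TGD by a set of TGDs. -/
def logEntails (Th : Finset TGD) (τ : TGD) : Prop :=
  ∀ J : Set Fact, (∀ γ ∈ Th, γ.holdsIn J) → τ.holdsIn J

/-! ## Signatures -/

/-- A relational signature: a finite set of relation names with their arities. -/
structure Sig where
  rels : Finset ℕ
  ar : ℕ → ℕ

/-- The arity of a signature: maximal arity of its relations. -/
def Sig.arity (S : Sig) : ℕ := S.rels.sup S.ar

def Sig.wfAtom (S : Sig) (A : Atom) : Prop := A.rel ∈ S.rels ∧ A.args.length = S.ar A.rel

def Sig.wfTGD (S : Sig) (τ : TGD) : Prop := (∀ A ∈ τ.body, S.wfAtom A) ∧ S.wfAtom τ.head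

/-! ## Side signatures -/

/-- A GTGD obeys side signature `S'` if for some choice of guard atom in its body,
all other body atoms are on relations of `S'`. -/
def TGD.obeys (τ : TGD) (S' : Finset ℕ) : Prop :=
  ∃ A, isGuard τ A ∧ ∀ B ∈ τ.body, B = A ∨ B.rel ∈ S'

/-- A principal guard: a guard atom on a principal (non-side) relation. -/
def isPrincipalGuard (S' : Finset ℕ) (τ : TGD) (A : Atom) : Prop :=
  isGuard τ A ∧ A.rel ∉ S'

/-- Renaming of the exported variables of a TGD by a function `h`
(identity on the other variables). -/
def TGD.renameExported (τ : TGD) (h : ℕ → ℕ) : TGD :=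
  ⟨τ.body.map (Atom.rename fun v => if v ∈ τ.exported then h v else v),
   (Atom.rename fun v => if v ∈ τ.exported then h v else v) τ.head⟩

/-- Homomorphism-closure: the set of GTGDs is closed under maps identifying
exported variables. -/
def homClosed (Th : Finset TGD) : Prop :=
  ∀ τ ∈ Th, ∀ h : ℕ → ℕ, (∀ v ∈ τ.exported, h v ∈ τ.exported) →
    τ.renameExported h ∈ Th

/-- A set of GTGDs strongly obeys side signature `S'`: it obeys `S'`,
is homomorphism-closed, every GTGD has exactly one principal guard, and
every non-full GTGD has a principal head atom. -/
def stronglyObeys (Th : Finset TGD) (S' : Finset ℕ) : Prop :=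
  (∀ τ ∈ Th, τ.obeys S') ∧
  homClosed Th ∧
  (∀ τ ∈ Th, ∃! A : Atom, isPrincipalGuard S' τ A) ∧
  (∀ τ ∈ Th, ¬ τ.isFull → τ.head.rel ∉ S')

/-- Maximal width of a finite set of TGDs. -/
def maxWidth (Th : Finset TGD) : ℕ := Th.sup TGD.width

/-! ## Emulation -/

/-- `I0', Th'` emulates `I0, Th` on signature `S`: the two pairs entail the same
Boolean CQs over `S`. -/
def emulates (I0' : Finset Fact) (Th' : Finset TGD) (I0 : Finset Fact) (Th : Finset TGD)
    (S : Sig) : Prop :=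
  ∀ Q : CQ, (∀ A ∈ Q, S.wfAtom A) → (entailsQ I0 Th Q ↔ entailsQ I0' Th' Q)

/-! ## Semi-width -/

/-- Edge of the basic position graph of a set of TGDs: an edge from position `(R,i)` to
`(U,j)` when some TGD has an exported variable at position `i` of an `R`-atom of its body
and at position `j` of its head atom, on relation `U`. -/
def posEdge (Th : Finset TGD) (p q : ℕ × ℕ) : Prop :=
  ∃ τ ∈ Th, ∃ x ∈ τ.exported, ∃ A ∈ τ.body,
    A.rel = p.1 ∧ A.args[p.2]? = some x ∧ τ.head.rel = q.1 ∧ τ.head.args[q.2]? = some x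

/-- The basic position graph is acyclic. -/
def posAcyclic (Th : Finset TGD) : Prop :=
  ∀ p, ¬ Relation.TransGen (posEdge Th) p p

/-- Semi-width at most `w`: the TGDs decompose into a part of width at most `w` and a part
whose basic position graph is acyclic. -/
def semiWidthLe (Th : Finset TGD) (w : ℕ) : Prop :=
  ∃ T1 T2 : Finset TGD, Th = T1 ∪ T2 ∧ (∀ τ ∈ T1, τ.width ≤ w) ∧ posAcyclic T2

/-! ## Isomorphic copies -/

/-- `B` is an isomorphic copy of the atom `A`. -/
def atomIso (A B : Atom) : Prop :=
  ∃ r : ℕ → ℕ, Set.InjOn r ↑A.vars ∧ B = A.rename r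

def TGD.allVars (τ : TGD) : Finset ℕ := τ.bodyVars ∪ τ.head.vars

def TGD.renameAll (σ : ℕ → ℕ) (τ : TGD) : TGD :=
  ⟨τ.body.map (Atom.rename σ), τ.head.rename σ⟩

/-- `τ` is a variable-renaming (isomorphic copy) of the TGD `γ`. -/
def tgdIso (γ τ : TGD) : Prop :=
  ∃ r : ℕ → ℕ, Set.InjOn r ↑γ.allVars ∧ τ = γ.renameAll r

/-- An isomorphism from a finite instance `S` onto a set of facts `T`. -/
def instIso (S : Finset Fact) (T : Set Fact) : Prop :=
  ∃ h : ℕ → ℕ, Set.InjOn h ↑(adomF S) ∧ T = (Atom.rename h) '' ↑S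

/-! ## Childish instances and saturations -/

/-- A childish instance: one principal fact which is an isomorphic copy of some GTGD head
of `Th`, together with side facts whose active domain is a set of at most `w` elements
of the principal fact. -/
def childish (Th : Finset TGD) (S' : Finset ℕ) (w : ℕ) (I : Finset Fact) : Prop :=
  ∃ F ∈ I, F.rel ∉ S' ∧ (∃ τ ∈ Th, atomIso τ.head F) ∧
    (∀ G ∈ I, G ≠ F → G.rel ∈ S' ∧ G.vars ⊆ F.vars) ∧
    (adomF (I.erase F)).card ≤ w

/-- A childish saturation of `Th`: a finite set of full TGDs, each entailed by `Th`,
which is complete for fact entailment over childish instances. -/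
def childishSaturation (Th : Finset TGD) (S' : Finset ℕ) (w : ℕ) (Th' : Finset TGD) : Prop :=
  (∀ τ ∈ Th', τ.isFull) ∧
  (∀ τ ∈ Th', logEntails Th τ) ∧
  (∀ I : Finset Fact, childish Th S' w I →
    ∀ F : Fact, F.vars ⊆ adomF I → entailsF I Th F → entailsF I Th' F)

/-- A `Th`-fact-saturated instance: closed under entailed facts on the same domain. -/
def factSaturated (Th : Finset TGD) (I : Finset Fact) : Prop :=
  ∀ F : Fact, F.vars ⊆ adomF I → entailsF I Th F → F ∈ I

/-! ## Suitable GTGDs and the suitable saturation -/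

/-- An atom is `Th`-compatible: it is a side atom, or isomorphic to the head atom of
some GTGD of `Th`. -/
def compatible (Th : Finset TGD) (S' : Finset ℕ) (A : Atom) : Prop :=
  A.rel ∈ S' ∨ ∃ τ ∈ Th, atomIso τ.head A

/-- Breadth at most `b`: the non-guard body atoms only use at most `b` variables of the
principal guard. -/
def breadthLe (S' : Finset ℕ) (τ : TGD) (b : ℕ) : Prop :=
  ∃ A, isPrincipalGuard S' τ A ∧ ∃ X : Finset ℕ, X ⊆ A.vars ∧ X.card ≤ b ∧
    ∀ B ∈ τ.body, B ≠ A → B.vars ⊆ X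

/-- A `Th`-suitable GTGD: a well-formed full GTGD obeying the side signature, which is
`Th`-compatible, has exactly one principal guard, breadth at most `w` and width at
most `w`. -/
def suitable (Sg : Sig) (S' : Finset ℕ) (Th : Finset TGD) (w : ℕ) (τ : TGD) : Prop :=
  Sg.wfTGD τ ∧ τ.isFull ∧ τ.obeys S' ∧
  (∃! A : Atom, isPrincipalGuard S' τ A) ∧
  (∀ A, isPrincipalGuard S' τ A → compatible Th S' A) ∧
  compatible Th S' τ.head ∧
  breadthLe S' τ w ∧ τ.width ≤ w

/-- The trivial full GTGDs `Σ_triv`: the body consists of a principal atom `A` which is an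
isomorphic copy of a GTGD head of `Th` and of side atoms on at most `w` variables of `A`,
and the head is `A` itself. -/
def trivTGD (Sg : Sig) (S' : Finset ℕ) (Th : Finset TGD) (w : ℕ) (τ : TGD) : Prop :=
  Sg.wfTGD τ ∧ ∃ A ∈ τ.body, A.rel ∉ S' ∧ (∃ γ ∈ Th, atomIso γ.head A) ∧ τ.head = A ∧
    ∃ X : Finset ℕ, X ⊆ A.vars ∧ X.card ≤ w ∧
      ∀ B ∈ τ.body, B ≠ A → B.rel ∈ S' ∧ B.vars ⊆ X

/-- The `S'`-suitable saturation `Ω(Σ)`: closure of the suitable full GTGDs of `Th` and of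
the trivial suitable full GTGDs under the inference rules (Transitivity) and
(Principal+Transitivity), keeping only suitable conclusions. -/
inductive Sat (Sg : Sig) (S' : Finset ℕ) (Th : Finset TGD) (w : ℕ) : TGD → Prop
  | base {τ : TGD} (hτ : τ ∈ Th) (hs : suitable Sg S' Th w τ) : Sat Sg S' Th w τ
  | triv {τ : TGD} (ht : trivTGD Sg S' Th w τ) (hs : suitable Sg S' Th w τ) : Sat Sg S' Th w τ
  | transTh {β Bs1 Bs2 : List Atom} {δ : TGD} {υ : ℕ → ℕ}
      (hBs1 : ∀ B ∈ Bs1, Sat Sg S' Th w ⟨β, B⟩)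
      (hBs2 : ∀ B ∈ Bs2, trivTGD Sg S' Th w ⟨β, B⟩)
      (hδ : δ ∈ Th)
      (hfull : δ.isFull)
      (hhom : ∀ A ∈ δ.body, A.rename υ ∈ β ∨ A.rename υ ∈ Bs1 ∨ A.rename υ ∈ Bs2)
      (hs : suitable Sg S' Th w ⟨β, δ.head.rename υ⟩) :
      Sat Sg S' Th w ⟨β, δ.head.rename υ⟩
  | transSat {β Bs1 Bs2 : List Atom} {δ : TGD} {υ : ℕ → ℕ}
      (hBs1 : ∀ B ∈ Bs1, Sat Sg S' Th w ⟨β, B⟩)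
      (hBs2 : ∀ B ∈ Bs2, trivTGD Sg S' Th w ⟨β, B⟩)
      (hδ : Sat Sg S' Th w δ)
      (hfull : δ.isFull)
      (hhom : ∀ A ∈ δ.body, A.rename υ ∈ β ∨ A.rename υ ∈ Bs1 ∨ A.rename υ ∈ Bs2)
      (hs : suitable Sg S' Th w ⟨β, δ.head.rename υ⟩) :
      Sat Sg S' Th w ⟨β, δ.head.rename υ⟩
  | princTrans {β Bs1 Bs2 : List Atom} {δcc : TGD} {Acc : Atom} {δ0 δ' : TGD} {v : ℕ → ℕ}
      (hBs1 : ∀ B ∈ Bs1, Sat Sg S' Th w ⟨β, B⟩)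
      (hBs2 : ∀ B ∈ Bs2, trivTGD Sg S' Th w ⟨β, B⟩)
      (hcc : δcc ∈ Th) (hccP : δcc.head.rel ∉ S')
      (hAcc : isPrincipalGuard S' δcc Acc)
      (hδ0 : Sat Sg S' Th w δ0)
      (hiso : tgdIso δ0 δ')
      (hfull : δ'.isFull)
      (hguard : isPrincipalGuard S' δ' δcc.head)
      (hside : ∀ A ∈ δ'.body, A ≠ δcc.head → A.vars ⊆ δcc.exported)
      (hheadv : δ'.head.vars ⊆ δcc.exported)
      (hv1 : Acc.rename v ∈ β ∨ Acc.rename v ∈ Bs1 ∨ Acc.rename v ∈ Bs2)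
      (hv2 : ∀ A ∈ δcc.body, A ≠ Acc →
        (A.rename v ∈ β ∨ A.rename v ∈ Bs1 ∨ A.rename v ∈ Bs2))
      (hv3 : ∀ A ∈ δ'.body, A ≠ δcc.head →
        (A.rename v ∈ β ∨ A.rename v ∈ Bs1 ∨ A.rename v ∈ Bs2))
      (hs : suitable Sg S' Th w ⟨β, δ'.head.rename v⟩) :
      Sat Sg S' Th w ⟨β, δ'.head.rename v⟩


/-! ## Chase trees and the principal-exempt one-pass chase -/

/-- A chase tree: a finite prefix-closed set of node positions (the root is `[]`,
children of `v` are `v ++ [k]`), a labelling of nodes by finite sets of facts,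
and a recently-updated node. -/
structure CTree where
  nodes : Finset (List ℕ)
  lbl : List ℕ → Finset Fact
  recent : List ℕ

/-- All facts of a chase tree (its underlying instance). -/
def CTree.facts (T : CTree) : Finset Fact := T.nodes.biUnion T.lbl

/-- The active domain of a chase tree. -/
def CTree.adom (T : CTree) : Finset ℕ := T.nodes.biUnion fun v => adomF (T.lbl v)

/-- The initial chase tree on instance `I0`: a single root node labelled `I0`. -/
def initTree (I0 : Finset Fact) : CTree :=
  ⟨{[]}, fun v => if v = [] then I0 else ∅, []⟩

/-- A propagation step (of one side fact from the recently updated node to its parent)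
is applicable. -/
def Propagable (S' : Finset ℕ) (T : CTree) : Prop :=
  T.recent ≠ [] ∧ ∃ F ∈ T.lbl T.recent, F.rel ∈ S' ∧
    F ∉ T.lbl T.recent.dropLast ∧ F.vars ⊆ adomF (T.lbl T.recent.dropLast)

/-- One step of the principal-exempt one-pass chase for GTGDs `Th` strongly obeying
side signature `S'`. All steps apply at the recently updated node; chase steps are only
allowed when no propagation step applies; only side facts are inherited by new nodes. -/
inductive PEStep (Th : Finset TGD) (S' : Finset ℕ) : CTree → CTree → Prop
  /-- Propagation step: copy exactly one side fact to the parent (which must guard it and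
  not already contain it); the parent becomes recently updated. -/
  | prop (T : CTree) (F : Fact)
      (hrec : T.recent ∈ T.nodes) (hnr : T.recent ≠ [])
      (hF : F ∈ T.lbl T.recent) (hside : F.rel ∈ S')
      (hnew : F ∉ T.lbl T.recent.dropLast)
      (hgd : F.vars ⊆ adomF (T.lbl T.recent.dropLast)) :
      PEStep Th S' T
        ⟨T.nodes,
         Function.update T.lbl T.recent.dropLast
           (insert F (T.lbl T.recent.dropLast)),
         T.recent.dropLast⟩
  /-- Chase step with a full side GTGD: add the derived fact (which must be new in the
  underlying instance) to the recently updated node. -/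
  | fullSide (T : CTree) (τ : TGD) (σ : ℕ → ℕ)
      (hnp : ¬ Propagable S' T)
      (hτ : τ ∈ Th) (hfull : τ.isFull) (hside : τ.head.rel ∈ S')
      (htrig : ∀ A ∈ τ.body, A.rename σ ∈ T.lbl T.recent)
      (hnew : τ.head.rename σ ∉ T.facts) :
      PEStep Th S' T
        ⟨T.nodes,
         Function.update T.lbl T.recent (insert (τ.head.rename σ) (T.lbl T.recent)),
         T.recent⟩
  /-- Chase step with a non-full GTGD: create a fresh child of the recently updated node,
  containing the instantiated head (with fresh nulls for the existential variables)
  together with inherited side facts of the parent guarded by the new fact. -/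
  | nonfull (T : CTree) (τ : TGD) (σ σ' : ℕ → ℕ) (k : ℕ) (inh : Finset Fact)
      (hnp : ¬ Propagable S' T)
      (hτ : τ ∈ Th) (hnf : ¬ τ.isFull)
      (htrig : ∀ A ∈ τ.body, A.rename σ ∈ T.lbl T.recent)
      (hext : ∀ x ∈ τ.bodyVars, σ' x = σ x)
      (hfresh : ∀ y ∈ τ.existVars, σ' y ∉ T.adom)
      (hinj : Set.InjOn σ' ↑τ.existVars)
      (hnewnode : (T.recent ++ [k]) ∉ T.nodes)
      (hinh : inh ⊆ T.lbl T.recent)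
      (hinhside : ∀ F ∈ inh, F.rel ∈ S' ∧ F.vars ⊆ (τ.head.rename σ').vars) :
      PEStep Th S' T
        ⟨insert (T.recent ++ [k]) T.nodes,
         Function.update T.lbl (T.recent ++ [k]) (insert (τ.head.rename σ') inh),
         T.recent ++ [k]⟩
  /-- Relaxed chase step with a full principal TGD: create a fresh child of the
  recently updated node, containing the instantiated head together with inherited side
  facts of the parent guarded by it (no fresh value is introduced). -/
  | relaxed (T : CTree) (τ : TGD) (σ : ℕ → ℕ) (k : ℕ) (inh : Finset Fact)
      (hnp : ¬ Propagable S' T)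
      (hτ : τ ∈ Th) (hfull : τ.isFull) (hprin : τ.head.rel ∉ S')
      (htrig : ∀ A ∈ τ.body, A.rename σ ∈ T.lbl T.recent)
      (hnewnode : (T.recent ++ [k]) ∉ T.nodes)
      (hinh : inh ⊆ T.lbl T.recent)
      (hinhside : ∀ F ∈ inh, F.rel ∈ S' ∧ F.vars ⊆ (τ.head.rename σ).vars) :
      PEStep Th S' T
        ⟨insert (T.recent ++ [k]) T.nodes,
         Function.update T.lbl (T.recent ++ [k]) (insert (τ.head.rename σ) inh),
         T.recent ++ [k]⟩

/-- A principal-exempt one-pass tree-like chase proof of the fact `F` from `I0` and `Th`: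
a sequence of principal-exempt one-pass chase steps from the initial tree on `I0`,
ending in a tree containing `F` in some node. -/
def PEProof (I0 : Finset Fact) (Th : Finset TGD) (S' : Finset ℕ) (F : Fact) : Prop :=
  ∃ T : CTree, Relation.ReflTransGen (PEStep Th S') (initTree I0) T ∧ F ∈ T.facts

/-! ## The shortcut chase -/

/-- A tree of (possibly infinite) sets of facts, used for the shortcut chase. -/
structure SCTree where
  nodes : Finset (List ℕ)
  lbl : List ℕ → Set Fact

/-- The underlying instance of a shortcut chase tree. -/
def SCTree.facts (T : SCTree) : Set Fact := { F | ∃ v ∈ T.nodes, F ∈ T.lbl v }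

/-- Closure of a set of facts under the full TGDs of a finite set `Th'`. -/
def fullClosure (Th' : Finset TGD) (X : Set Fact) : Set Fact :=
  { F | ∀ J : Set Fact, X ⊆ J → (∀ τ ∈ Th', τ.isFull → τ.holdsIn J) → F ∈ J }

/-- Closure of a set of facts under the full TGDs of a family `R` of TGDs. -/
def fullClosureP (R : TGD → Prop) (X : Set Fact) : Set Fact :=
  { F | ∀ J : Set Fact, X ⊆ J → (∀ τ, R τ → τ.isFull → τ.holdsIn J) → F ∈ J }

/-- The initial shortcut chase tree on instance `I`. -/
def initSC (I : Finset Fact) : SCTree :=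
  ⟨{[]}, fun v => if v = [] then ↑I else ∅⟩

/-- A step of the shortcut chase based on the saturation `Th'`: fire a non-full GTGD of
`Th` at a node, creating a fresh child containing the new fact (with fresh nulls),
all facts of the parent guarded by it, and (full saturation step) all consequences of
the full GTGDs of `Th'`. There are no propagation steps. -/
inductive SCStep (Th Th' : Finset TGD) : SCTree → SCTree → Prop
  | step (T : SCTree) (g : List ℕ) (τ : TGD) (σ σ' : ℕ → ℕ) (k : ℕ)
      (hg : g ∈ T.nodes) (hτ : τ ∈ Th) (hnf : ¬ τ.isFull)
      (htrig : ∀ A ∈ τ.body, A.rename σ ∈ T.lbl g)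
      (hext : ∀ x ∈ τ.bodyVars, σ' x = σ x)
      (hfresh : ∀ y ∈ τ.existVars, ∀ u ∈ T.nodes, ∀ F ∈ T.lbl u, σ' y ∉ F.vars)
      (hinj : Set.InjOn σ' ↑τ.existVars)
      (hnew : (g ++ [k]) ∉ T.nodes) :
      SCStep Th Th' T
        ⟨insert (g ++ [k]) T.nodes,
         Function.update T.lbl (g ++ [k])
           (fullClosure Th'
             (insert (τ.head.rename σ')
               { F | F ∈ T.lbl g ∧ F.vars ⊆ (τ.head.rename σ').vars }))⟩

/-! ## The tree-like chase for linear TGDs, tight matches -/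

/-- A tree-like chase for linear TGDs: the root `[]` implicitly holds the initial
instance; each non-root node holds exactly one fact `fct v` and records the rule
`rule v` used to create it. -/
structure LinChase where
  nodes : Finset (List ℕ)
  fct : List ℕ → Fact
  rule : List ℕ → TGD

/-- Validity of a linear chase tree for initial instance `I0` and linear TGDs `Th`:
each non-root node is created by firing its rule on the fact of its parent (or a fact of
`I0` for children of the root), with fresh distinct nulls for existential variables. -/
def LinChase.valid (C : LinChase) (I0 : Finset Fact) (Th : Finset TGD) : Prop :=
  [] ∈ C.nodes ∧ (∀ v ∈ C.nodes, ∀ u : List ℕ, u <+: v → u ∈ C.nodes) ∧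
  ∀ v ∈ C.nodes, v ≠ [] →
    C.rule v ∈ Th ∧
    ∃ B : Atom, ∃ σ : ℕ → ℕ, (C.rule v).body = [B] ∧
      (v.dropLast = [] → B.rename σ ∈ I0) ∧
      (v.dropLast ≠ [] → B.rename σ = C.fct v.dropLast) ∧
      C.fct v = (C.rule v).head.rename σ ∧
      Set.InjOn σ ↑(C.rule v).existVars ∧
      ∀ y ∈ (C.rule v).existVars,
        σ y ∉ adomF I0 ∧ ∀ u ∈ C.nodes, ¬ v <+: u → σ y ∉ (C.fct u).vars

/-- All facts of a linear chase tree, including the initial instance. -/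
def LinChase.allFacts (C : LinChase) (I0 : Finset Fact) : Set Fact :=
  ↑I0 ∪ { F | ∃ v ∈ C.nodes, v ≠ [] ∧ F = C.fct v }

/-- A match of the CQ `Q` in the linear chase tree. -/
def LinChase.isMatch (C : LinChase) (I0 : Finset Fact) (σ : ℕ → ℕ) (Q : CQ) : Prop :=
  ∀ A ∈ Q, A.rename σ ∈ C.allFacts I0

/-- Longest common prefix of two lists: the least common ancestor of two tree nodes. -/
def lcp : List ℕ → List ℕ → List ℕ
  | a :: as, b :: bs => if a = b then a :: lcp as bs else []
  | _, _ => []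

/-- The nodes of the chase tree containing an image fact of the match. -/
def imageNodes (C : LinChase) (σ : ℕ → ℕ) (Q : CQ) : Set (List ℕ) :=
  { v | v ∈ C.nodes ∧ v ≠ [] ∧ ∃ A ∈ Q, A.rename σ = C.fct v }

/-- The augmented image of a match: the closure of its image under least common
ancestors, together with the root. -/
def augImage (C : LinChase) (σ : ℕ → ℕ) (Q : CQ) : Set (List ℕ) :=
  {[]} ∪ imageNodes C σ Q ∪
    { u | ∃ v ∈ imageNodes C σ Q, ∃ w ∈ imageNodes C σ Q, u = lcp v w }

/-- `n` is the image parent of `n'`: the lowest strict ancestor of `n'` within the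
augmented image. -/
def imageParent (S : Set (List ℕ)) (n n' : List ℕ) : Prop :=
  n ∈ S ∧ n' ∈ S ∧ n <+: n' ∧ n ≠ n' ∧
    ∀ m ∈ S, n <+: m → m <+: n' → (m = n ∨ m = n')

/-- Nodes `n` (an ancestor) and `n'` are far apart: between them lie two distinct
generated facts produced by the same rule, with the same equality pattern between
positions, and sharing values only at identical positions. -/
def farApart (C : LinChase) (n n' : List ℕ) : Prop :=
  ∃ n1 ∈ C.nodes, ∃ n2 ∈ C.nodes, n1 ≠ [] ∧ n2 ≠ [] ∧ n1 ≠ n2 ∧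
    n <+: n1 ∧ n1 <+: n2 ∧ n2 <+: n' ∧
    C.fct n1 ≠ C.fct n2 ∧ C.rule n1 = C.rule n2 ∧
    (∀ i j : ℕ, ((C.fct n1).args[i]? = (C.fct n1).args[j]? ↔
      (C.fct n2).args[i]? = (C.fct n2).args[j]?)) ∧
    (∀ a : ℕ, a ∈ (C.fct n1).args → a ∈ (C.fct n2).args →
      ∀ i : ℕ, ((C.fct n1).args[i]? = some a ↔ (C.fct n2).args[i]? = some a))

/-- A tight match: every node of the augmented image is near its image parent. -/
def tightMatch (C : LinChase) (σ : ℕ → ℕ) (Q : CQ) : Prop :=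
  ∀ n n', imageParent (augImage C σ Q) n n' → ¬ farApart C n n'


/-! ## Linearization -/

/-- Canonical childish instances: well-formed childish instances whose active domain is
contained in `{0, …, arity(Sg) - 1}` (one representative per isomorphism type). -/
def canonChildish (Sg : Sig) (S' : Finset ℕ) (Th : Finset TGD) (w : ℕ) :
    Set (Finset Fact) :=
  { S | childish Th S' w S ∧ (∀ F ∈ S, Sg.wfAtom F) ∧ adomF S ⊆ Finset.range Sg.arity }

/-- The marked elements of a childish instance with principal fact `P`: the active domain
of its side part. -/
def markedElems (S : Finset Fact) (P : Fact) : Finset ℕ := adomF (S.erase P)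

/-- A homomorphism from the marked elements of `S` (with principal fact `P`) to
themselves, extended as the identity elsewhere. -/
def markedHom (S : Finset Fact) (P : Fact) (h : ℕ → ℕ) : Prop :=
  (∀ x ∈ markedElems S P, h x ∈ markedElems S P) ∧ ∀ x, x ∉ markedElems S P → h x = x

/-- The closure `S*` of `h(S)` under the full TGDs of the `S'`-suitable saturation of
`Th`. -/
def satClosure (Sg : Sig) (S' : Finset ℕ) (Th : Finset TGD) (w : ℕ)
    (S : Finset Fact) (h : ℕ → ℕ) : Set Fact :=
  fullClosureP (Sat Sg S' Th w) ((Atom.rename h) '' ↑S)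

/-- The (Instantiate) rules of `Linearize(Σ)`: for every canonical childish instance `S`
with principal fact `P`, marked homomorphism `h`, and fact `F` of the closure `S*` of
`h(S)`, the full linear TGD `R_S(h(x⃗)) → F`. The fresh relation `R_S` is named by the
injection `ρ`. -/
def instantiateRules (Sg : Sig) (S' : Finset ℕ) (Th : Finset TGD) (w : ℕ)
    (ρ : Finset Fact → ℕ) : Set TGD :=
  { τ | ∃ S ∈ canonChildish Sg S' Th w, ∃ P ∈ S, P.rel ∉ S' ∧
        ∃ h : ℕ → ℕ, markedHom S P h ∧
        ∃ F ∈ satClosure Sg S' Th w S h,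
          τ = ⟨[⟨ρ S, P.args.map h⟩], F⟩ }

/-- The (Lift) rules of `Linearize(Σ)`: for every canonical childish instance `S` with
principal fact `P`, marked homomorphism `h` with closure `S*`, non-full GTGD `δ` of `Th`
and match `h'` of the body of `δ` in `S*`, extended with fresh distinct values `σ` for
the existential variables of `δ`, the linear TGD `R_S(h(x⃗)) → ∃ w⃗ R_{S''}(h'(z⃗), w⃗)`
where `S''` is the canonical childish instance isomorphic (via `g`) to the instance made
of the instantiated head of `δ` together with the facts of `S*` using only elements of
`h'(z⃗)` for `z⃗` the exported variables of `δ`. -/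
def liftRules (Sg : Sig) (S' : Finset ℕ) (Th : Finset TGD) (w : ℕ)
    (ρ : Finset Fact → ℕ) : Set TGD :=
  { τ | ∃ S ∈ canonChildish Sg S' Th w, ∃ P ∈ S, P.rel ∉ S' ∧
        ∃ h : ℕ → ℕ, markedHom S P h ∧
        ∃ δ ∈ Th, ¬ δ.isFull ∧
        ∃ h' σ : ℕ → ℕ,
          (∀ A ∈ δ.body, A.rename h' ∈ satClosure Sg S' Th w S h) ∧
          (∀ x ∈ δ.bodyVars, σ x = h' x) ∧
          Set.InjOn σ ↑δ.existVars ∧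
          (∀ y ∈ δ.existVars, ∀ G ∈ satClosure Sg S' Th w S h, σ y ∉ G.vars) ∧
        ∃ S'' ∈ canonChildish Sg S' Th w, ∃ P'' ∈ S'', P''.rel ∉ S' ∧
        ∃ g : ℕ → ℕ, Set.InjOn g ↑(adomF S'') ∧
          P''.rename g = δ.head.rename σ ∧
          (Atom.rename g) '' ↑S'' =
            insert (δ.head.rename σ)
              { G | G ∈ satClosure Sg S' Th w S h ∧
                    G.vars ⊆ Finset.image h' δ.exported } ∧
          τ = ⟨[⟨ρ S, P.args.map h⟩], ⟨ρ S'', P''.args.map g⟩⟩ }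

/-- `Linearize(Σ)`: the linear TGDs produced by the rules (Instantiate) and (Lift). -/
def linearize (Sg : Sig) (S' : Finset ℕ) (Th : Finset TGD) (w : ℕ)
    (ρ : Finset Fact → ℕ) : Set TGD :=
  instantiateRules Sg S' Th w ρ ∪ liftRules Sg S' Th w ρ

/-- The instance `I^Lin`: `I` together with, for every principal fact `F` of `I` and
every set of at most `w` elements of `F`, the fact `R_S(a⃗)` for `S` the canonical
representative of the childish instance made of `F` and the side facts of `I` on the
chosen elements. -/
def ILin (Sg : Sig) (S' : Finset ℕ) (Th : Finset TGD) (w : ℕ)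
    (ρ : Finset Fact → ℕ) (I : Finset Fact) : Set Fact :=
  ↑I ∪ { G | ∃ F ∈ I, F.rel ∉ S' ∧ ∃ Ps : Finset ℕ, Ps ⊆ F.vars ∧ Ps.card ≤ w ∧
        ∃ S0 ∈ canonChildish Sg S' Th w, ∃ P0 ∈ S0, P0.rel ∉ S' ∧
        ∃ g : ℕ → ℕ, Set.InjOn g ↑(adomF S0) ∧ P0.rename g = F ∧
          (Atom.rename g) '' ↑S0 =
            insert F { H | H ∈ I ∧ H.rel ∈ S' ∧ H.vars ⊆ Ps } ∧
        G = ⟨ρ S0, P0.args.map g⟩ }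


/-! ## Multi-headed TGDs and TGDs with constants -/

/-- An atom possibly containing constants: arguments are either variables (`.inl`) or
constants (`.inr`). -/
structure CAtom where
  rel : ℕ
  args : List (ℕ ⊕ ℕ)
deriving DecidableEq

/-- The variables of an atom with constants. -/
def CAtom.vars (A : CAtom) : Finset ℕ := (A.args.filterMap Sum.getLeft?).toFinset

/-- Whether an atom with constants is actually constant-free. -/
def CAtom.constantFree (A : CAtom) : Prop := ∀ t ∈ A.args, t.isLeft

/-- Instantiate an atom with constants by a variable assignment (constants denote
themselves). -/
def CAtom.inst (σ : ℕ → ℕ) (A : CAtom) : Fact := ⟨A.rel, A.args.map (Sum.elim σ id)⟩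

def Sig.wfCAtom (S : Sig) (A : CAtom) : Prop := A.rel ∈ S.rels ∧ A.args.length = S.ar A.rel

/-- A multi-headed TGD with constants: body and head are conjunctions of atoms which may
contain constants. -/
structure MTGD where
  body : List CAtom
  head : List CAtom
deriving DecidableEq

def MTGD.bodyVars (τ : MTGD) : Finset ℕ := τ.body.foldr (fun A s => A.vars ∪ s) ∅

/-- A multi-headed TGD is guarded when some body atom contains all body variables. -/
def MTGD.guarded (τ : MTGD) : Prop := ∃ A ∈ τ.body, τ.bodyVars ⊆ A.vars

/-- A multi-headed GTGD obeys side signature `S'`. -/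
def MTGD.obeys (τ : MTGD) (S' : Finset ℕ) : Prop :=
  ∃ A, (A ∈ τ.body ∧ τ.bodyVars ⊆ A.vars) ∧ ∀ B ∈ τ.body, B = A ∨ B.rel ∈ S'

def MTGD.holdsIn (τ : MTGD) (I : Set Fact) : Prop :=
  ∀ σ : ℕ → ℕ, (∀ A ∈ τ.body, A.inst σ ∈ I) →
    ∃ σ' : ℕ → ℕ, (∀ v ∈ τ.bodyVars, σ' v = σ v) ∧ ∀ A ∈ τ.head, A.inst σ' ∈ I

def Sig.wfMTGD (S : Sig) (τ : MTGD) : Prop :=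
  (∀ A ∈ τ.body, S.wfCAtom A) ∧ (∀ A ∈ τ.head, S.wfCAtom A)

/-- A single-headed TGD with constants. -/
structure CTGD where
  body : List CAtom
  head : CAtom
deriving DecidableEq

def CTGD.bodyVars (τ : CTGD) : Finset ℕ := τ.body.foldr (fun A s => A.vars ∪ s) ∅

def CTGD.guarded (τ : CTGD) : Prop := ∃ A ∈ τ.body, τ.bodyVars ⊆ A.vars

def CTGD.obeys (τ : CTGD) (S' : Finset ℕ) : Prop :=
  ∃ A, (A ∈ τ.body ∧ τ.bodyVars ⊆ A.vars) ∧ ∀ B ∈ τ.body, B = A ∨ B.rel ∈ S'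

def CTGD.holdsIn (τ : CTGD) (I : Set Fact) : Prop :=
  ∀ σ : ℕ → ℕ, (∀ A ∈ τ.body, A.inst σ ∈ I) →
    ∃ σ' : ℕ → ℕ, (∀ v ∈ τ.bodyVars, σ' v = σ v) ∧ τ.head.inst σ' ∈ I

def Sig.wfCTGD (S : Sig) (τ : CTGD) : Prop :=
  (∀ A ∈ τ.body, S.wfCAtom A) ∧ S.wfCAtom τ.head

/-- A conjunctive query possibly containing constants. -/
abbrev CCQ := List CAtom

def CCQholds (Q : CCQ) (I : Set Fact) : Prop := ∃ σ : ℕ → ℕ, ∀ A ∈ Q, A.inst σ ∈ I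

/-- OWQA entailment for multi-headed TGDs with constants. -/
def entailsQM (I0 : Finset Fact) (Th : Finset MTGD) (Q : CCQ) : Prop :=
  ∀ J : Set Fact, ↑I0 ⊆ J → (∀ τ ∈ Th, τ.holdsIn J) → CCQholds Q J

/-- OWQA entailment for single-headed TGDs with constants. -/
def entailsQC (I0 : Finset Fact) (Th : Finset CTGD) (Q : CCQ) : Prop :=
  ∀ J : Set Fact, ↑I0 ⊆ J → (∀ τ ∈ Th, τ.holdsIn J) → CCQholds Q J

/-- A constant-free atom viewed as an atom with constants. -/
def Atom.toCAtom (A : Atom) : CAtom := ⟨A.rel, A.args.map Sum.inl⟩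


/-! ## Encodings and machine-based complexity -/

/-- The identity finite encoding of bit strings. -/
def boolListEnc : Computability.Encoding (List Bool) Bool where
  encode := id
  decode := fun l => some l
  decode_encode := fun _ => rfl

/-- Self-delimiting encoding of a natural number as a bit string. -/
def encNat (n : ℕ) : List Bool := List.replicate n true ++ [false]

/-- Encoding of a list as a bit string, given an encoding of its elements. -/
def encListBy {α : Type} (f : α → List Bool) (l : List α) : List Bool :=
  encNat l.length ++ l.foldr (fun a r => f a ++ r) []

def encAtom (A : Atom) : List Bool := encNat A.rel ++ encListBy encNat A.args

def encFact : Fact → List Bool := encAtom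

def encTGD (τ : TGD) : List Bool := encListBy encAtom τ.body ++ encAtom τ.head

def encCQ (Q : CQ) : List Bool := encListBy encAtom Q

def encSum (t : ℕ ⊕ ℕ) : List Bool :=
  match t with
  | .inl v => true :: encNat v
  | .inr c => false :: encNat c

def encCAtom (A : CAtom) : List Bool := encNat A.rel ++ encListBy encSum A.args

def encMTGD (τ : MTGD) : List Bool := encListBy encCAtom τ.body ++ encListBy encCAtom τ.head

def encCTGD (τ : CTGD) : List Bool := encListBy encCAtom τ.body ++ encCAtom τ.head

/-- Encoding of a signature given as a list of (relation, arity) pairs. -/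
def encSigL (l : List (ℕ × ℕ)) : List Bool :=
  encListBy (fun p => encNat p.1 ++ encNat p.2) l

/-- Encoding of an OWQA input: an instance, a set of TGDs, and a CQ. -/
def encOWQA (I0 : List Fact) (Th : List TGD) (Q : CQ) : List Bool :=
  encListBy encFact I0 ++ encListBy encTGD Th ++ encCQ Q

/-- Pairing of an input string with a certificate string. -/
def pairCode (u v : List Bool) : List Bool := encNat u.length ++ u ++ v

/-- The signature described by a list of (relation, arity) pairs. -/
def sigOf (l : List (ℕ × ℕ)) : Sig :=
  ⟨(l.map Prod.fst).toFinset, fun r => ((l.lookup r).getD 0)⟩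

/-- `f` is computed by a deterministic Turing machine within time `T` (as a function of
the input length). -/
def ComputedInTime (f : List Bool → Bool) (T : ℕ → ℕ) : Prop :=
  ∃ c : Turing.TM2ComputableInTime boolListEnc.encode Computability.encodingBoolBool.encode f,
    ∀ n, c.time n ≤ T n

/-- The machine `M` (with bit-string input and output alphabets), started on input `x`,
halts with output `y` within `m` steps. -/
def OutputsInSteps (M : Turing.TM2ComputableAux Bool Bool) (x y : List Bool) (m : ℕ) :
    Prop :=
  Nonempty (Turing.TM2OutputsInTime M.tm (x.map M.inputAlphabet.invFun)
    (some (y.map M.outputAlphabet.invFun)) m)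

/-
Induction on the size of the chase tree. If the match is not tight, some node `n'` of the
augmented image is far apart from its image parent `n`, as witnessed by facts `F₁` at `n₁` and
`F₂` at `n₂` with `n ≼ n₁ ≺ n₂ ≼ n'`. Since `F₁` and `F₂` have the same shape, there is a
renaming `r` with `r F₂ = F₁` fixing their shared values and all values outside `F₂`. Moving
the subtree strictly below `n₂` under `n₁` and renaming its values by `r` gives again a valid
chase tree (a linear rule only looks at the parent fact), with fewer nodes since `n₂` is gone,
and `r ∘ σ` is a match in it: `r` fixes every image fact outside the subtree of `n₂`, because
a value of `F₂` that is not in `F₁` is a null invented strictly between `n₁` and `n₂`, and an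
image fact containing it would put a node of the augmented image strictly between `n` and `n'`.
-/

theorem prefix_lcp_iff : ∀ {c x y : List ℕ}, c <+: lcp x y ↔ c <+: x ∧ c <+: y
  | [], _, _ => by simp
  | _ :: _, [], _ => by simp [lcp]
  | _ :: _, _ :: _, [] => by simp [lcp]
  | d :: c, a :: x, b :: y => by
    by_cases hab : a = b
    · subst hab
      simp only [lcp, if_true, List.cons_prefix_cons, prefix_lcp_iff]
      tauto
    · simp only [lcp, hab, if_false, List.cons_prefix_cons, List.prefix_nil, reduceCtorEq,
        false_iff, not_and]
      rintro ⟨rfl, -⟩ rfl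
      exact (hab rfl).elim

theorem lcp_prefix_left (x y : List ℕ) : lcp x y <+: x :=
  (prefix_lcp_iff.1 (List.prefix_refl _)).1

theorem lcp_prefix_right (x y : List ℕ) : lcp x y <+: y :=
  (prefix_lcp_iff.1 (List.prefix_refl _)).2

theorem lcp_comm (x y : List ℕ) : lcp x y = lcp y x :=
  (prefix_lcp_iff.2 ⟨lcp_prefix_right x y, lcp_prefix_left x y⟩).eq_of_length_le
    (prefix_lcp_iff.2 ⟨lcp_prefix_right y x, lcp_prefix_left y x⟩).length_le

theorem lcp_nil_right (x : List ℕ) : lcp x [] = [] :=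
  List.prefix_nil.1 (lcp_prefix_right x [])

theorem lcp_lcp_eq_left_of_prefix {m v w : List ℕ} (h : lcp m v <+: lcp m w) :
    lcp m (lcp v w) = lcp m v :=
  (prefix_lcp_iff.2 ⟨lcp_prefix_left _ _,
      (lcp_prefix_right _ _).trans (lcp_prefix_left _ _)⟩).eq_of_length_le
    (prefix_lcp_iff.2 ⟨lcp_prefix_left _ _,
      prefix_lcp_iff.2 ⟨lcp_prefix_right _ _, h.trans (lcp_prefix_right _ _)⟩⟩).length_le

theorem lcp_lcp_eq_or (m v w : List ℕ) :
    lcp m (lcp v w) = lcp m v ∨ lcp m (lcp v w) = lcp m w := by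
  rcases List.prefix_or_prefix_of_prefix (lcp_prefix_left m v) (lcp_prefix_left m w) with h | h
  · exact Or.inl (lcp_lcp_eq_left_of_prefix h)
  · exact Or.inr (lcp_comm v w ▸ lcp_lcp_eq_left_of_prefix h)

theorem prefix_append_cases {α : Type*} {u a b : List α} (h : u <+: a ++ b) :
    u <+: a ∨ ∃ b', b' <+: b ∧ u = a ++ b' := by
  rcases List.prefix_or_prefix_of_prefix h (List.prefix_append a b) with h' | ⟨b', rfl⟩
  · exact Or.inl h'
  · exact Or.inr ⟨b', (List.prefix_append_right_inj a).1 h, rfl⟩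

theorem length_le_of_getElem?_eq_imp {α : Type*} {l₁ l₂ : List α}
    (h : ∀ i j : ℕ, l₁[i]? = l₁[j]? → l₂[i]? = l₂[j]?) : l₂.length ≤ l₁.length := by
  by_contra! hlt
  have := h l₁.length l₂.length (by simp [List.getElem?_eq_none_iff.2 hlt.le])
  simp [List.getElem?_eq_getElem hlt] at this

theorem exists_map_eq_of_getElem?_eq_iff {α : Type*} [DecidableEq α] {l₁ l₂ : List α}
    (h : ∀ i j : ℕ, l₁[i]? = l₁[j]? ↔ l₂[i]? = l₂[j]?) :
    ∃ r : α → α, l₂.map r = l₁ ∧ ∀ a ∉ l₂, r a = a := by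
  have hlen : l₁.length = l₂.length := le_antisymm
    (length_le_of_getElem?_eq_imp fun i j => (h i j).2)
    (length_le_of_getElem?_eq_imp fun i j => (h i j).1)
  refine ⟨fun a => if a ∈ l₂ then l₁.getD (l₂.idxOf a) a else a, ?_, fun a ha => if_neg ha⟩
  refine List.ext_getElem? fun i => ?_
  rw [List.getElem?_map]
  cases hi : l₂[i]? with
  | none => rw [Option.map_none, eq_comm, List.getElem?_eq_none_iff, hlen]; simpa using hi
  | some a =>
    have ha : a ∈ l₂ := List.mem_of_getElem? hi
    have hi₁ : l₁[l₂.idxOf a]? = l₁[i]? := (h _ _).2 ((List.getElem?_idxOf ha).trans hi.symm)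
    have hlt : i < l₁.length := hlen ▸ (List.getElem?_eq_some_iff.1 hi).1
    rw [Option.map_some, if_pos ha, List.getD_eq_getElem?_getD, hi₁,
      List.getElem?_eq_getElem hlt, Option.getD_some]

def shiftHead (N : ℕ) : List ℕ → List ℕ
  | [] => []
  | j :: s => (j + N) :: s

theorem shiftHead_injective (N : ℕ) : Function.Injective (shiftHead N)
  | [], [], _ => rfl
  | _ :: _, _ :: _, h => by simp_all [shiftHead]

@[simp] theorem shiftHead_eq_nil {N : ℕ} {t : List ℕ} : shiftHead N t = [] ↔ t = [] := by
  cases t <;> simp [shiftHead]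

theorem dropLast_shiftHead (N : ℕ) :
    ∀ t : List ℕ, (shiftHead N t).dropLast = shiftHead N t.dropLast
  | [] => rfl
  | [_] => rfl
  | _ :: _ :: _ => rfl

theorem shiftHead_prefix_shiftHead (N : ℕ) {t t' : List ℕ} (h : t <+: t') :
    shiftHead N t <+: shiftHead N t' := by
  cases t with
  | nil => exact List.nil_prefix
  | cons j s =>
    obtain ⟨rest, rfl⟩ := h
    exact ⟨rest, rfl⟩

theorem exists_eq_shiftHead_of_prefix {N : ℕ} {x t : List ℕ} (h : x <+: shiftHead N t) :
    ∃ t', t' <+: t ∧ x = shiftHead N t' := by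
  cases t with
  | nil => exact ⟨[], List.nil_prefix, List.prefix_nil.1 h⟩
  | cons j s =>
    cases x with
    | nil => exact ⟨[], List.nil_prefix, rfl⟩
    | cons y x' =>
      obtain ⟨rfl, hx'⟩ := List.cons_prefix_cons.1 h
      exact ⟨j :: x', List.cons_prefix_cons.2 ⟨rfl, hx'⟩, rfl⟩

theorem ne_append_shiftHead {N : ℕ} {u : List ℕ} (hu : ∀ k ∈ u, k < N) (n₁ : List ℕ)
    {t : List ℕ} (ht : t ≠ []) : u ≠ n₁ ++ shiftHead N t := by
  rintro rfl
  obtain ⟨j, s, rfl⟩ := List.exists_cons_of_ne_nil ht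
  have := hu (j + N) (by simp [shiftHead])
  omega

namespace Atom

theorem mem_vars {A : Atom} {a : ℕ} : a ∈ A.vars ↔ a ∈ A.args := List.mem_toFinset

theorem rename_rename (r s : ℕ → ℕ) (A : Atom) :
    (A.rename s).rename r = A.rename (r ∘ s) := by
  simp [rename]

theorem mem_vars_rename {r : ℕ → ℕ} {A : Atom} {a : ℕ} :
    a ∈ (A.rename r).vars ↔ ∃ x ∈ A.vars, r x = a := by
  simp [rename, vars]

theorem rename_eq_self {r : ℕ → ℕ} {A : Atom} (h : ∀ a ∈ A.vars, r a = a) :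
    A.rename r = A := by
  cases A
  simp only [rename, mk.injEq, true_and]
  exact List.map_congr_left (fun a ha => h a (mem_vars.2 ha)) |>.trans (List.map_id _)

theorem mem_vars_rename_of_fix {r : ℕ → ℕ} {F₁ F₂ G : Atom} (hr : F₂.rename r = F₁)
    (hfix : ∀ a ∉ F₂.vars, r a = a) {a : ℕ} (ha : a ∈ (G.rename r).vars) :
    (a ∈ G.vars ∧ a ∉ F₂.vars) ∨ a ∈ F₁.vars := by
  obtain ⟨x, hx, rfl⟩ := mem_vars_rename.1 ha
  by_cases hx₂ : x ∈ F₂.vars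
  · exact Or.inr (hr ▸ mem_vars_rename.2 ⟨x, hx₂, rfl⟩)
  · exact Or.inl (by rw [hfix x hx₂]; exact ⟨hx, hx₂⟩)

theorem exists_rename_of_getElem?_eq_iff {F₁ F₂ : Atom} (hrel : F₁.rel = F₂.rel)
    (hpat : ∀ i j : ℕ, F₁.args[i]? = F₁.args[j]? ↔ F₂.args[i]? = F₂.args[j]?)
    (hshare : ∀ a : ℕ, a ∈ F₁.args → a ∈ F₂.args →
      ∀ i : ℕ, (F₁.args[i]? = some a ↔ F₂.args[i]? = some a)) :
    ∃ r : ℕ → ℕ, F₂.rename r = F₁ ∧ (∀ a ∉ F₂.vars, r a = a) ∧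
      ∀ a ∈ F₁.vars, a ∈ F₂.vars → r a = a := by
  obtain ⟨r, hr, hfix⟩ := exists_map_eq_of_getElem?_eq_iff hpat
  refine ⟨r, by simp [rename, hr, ← hrel], fun a ha => hfix a (mt mem_vars.2 ha),
    fun a ha₁ ha₂ => ?_⟩
  obtain ⟨i, hi⟩ := List.mem_iff_getElem?.1 (mem_vars.1 ha₂)
  have := (hshare a (mem_vars.1 ha₁) (mem_vars.1 ha₂) i).2 hi
  rw [← hr, List.getElem?_map, hi] at this
  simpa using this

end Atom

theorem mem_adomF {I : Finset Fact} {a : ℕ} : a ∈ adomF I ↔ ∃ F ∈ I, a ∈ F.vars := by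
  simp [adomF]

theorem TGD.bodyVars_eq_of_body_eq {τ : TGD} {B : Atom} (h : τ.body = [B]) :
    τ.bodyVars = B.vars := by
  simp [TGD.bodyVars, h]

theorem lcp_mem_augImage {C : LinChase} {σ : ℕ → ℕ} {Q : CQ} {m u : List ℕ}
    (hm : m ∈ imageNodes C σ Q) (hu : u ∈ augImage C σ Q) : lcp m u ∈ augImage C σ Q := by
  rcases hu with (rfl | hu) | ⟨v, hv, w, hw, rfl⟩
  · exact Or.inl (Or.inl (lcp_nil_right m))
  · exact Or.inr ⟨m, hm, u, hu, rfl⟩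
  · rcases lcp_lcp_eq_or m v w with h | h <;> rw [h]
    · exact Or.inr ⟨m, hm, v, hv, rfl⟩
    · exact Or.inr ⟨m, hm, w, hw, rfl⟩

theorem imageParent.prefix_of_lcp_mem {S : Set (List ℕ)} {n n' m c : List ℕ}
    (h : imageParent S n n') (hm : lcp m n' ∈ S) (hnc : n <+: c) (hcn : c ≠ n)
    (hcn' : c <+: n') (hcm : c <+: m) : n' <+: m := by
  have hc : c <+: lcp m n' := prefix_lcp_iff.2 ⟨hcm, hcn'⟩
  rcases h.2.2.2.2 _ hm (hnc.trans hc) (lcp_prefix_right m n') with h' | h'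
  · exact absurd ((h' ▸ hc).eq_of_length_le hnc.length_le) hcn
  · exact h' ▸ lcp_prefix_left m n'

namespace LinChase

def ValidAt (C : LinChase) (I0 : Finset Fact) (Th : Finset TGD) (v : List ℕ) : Prop :=
  C.rule v ∈ Th ∧
    ∃ B : Atom, ∃ σ : ℕ → ℕ, (C.rule v).body = [B] ∧
      (v.dropLast = [] → B.rename σ ∈ I0) ∧
      (v.dropLast ≠ [] → B.rename σ = C.fct v.dropLast) ∧
      C.fct v = (C.rule v).head.rename σ ∧
      Set.InjOn σ ↑(C.rule v).existVars ∧
      ∀ y ∈ (C.rule v).existVars,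
        σ y ∉ adomF I0 ∧ ∀ u ∈ C.nodes, ¬ v <+: u → σ y ∉ (C.fct u).vars

variable {C : LinChase} {I0 : Finset Fact} {Th : Finset TGD}

theorem valid_iff : C.valid I0 Th ↔ [] ∈ C.nodes ∧
    (∀ v ∈ C.nodes, ∀ u : List ℕ, u <+: v → u ∈ C.nodes) ∧
      ∀ v ∈ C.nodes, v ≠ [] → C.ValidAt I0 Th v :=
  Iff.rfl

theorem valid.mem_vars_parent_or_fresh (hC : C.valid I0 Th) {v : List ℕ} (hv : v ∈ C.nodes)
    (hv₀ : v.dropLast ≠ []) {a : ℕ} (ha : a ∈ (C.fct v).vars) :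
    a ∈ (C.fct v.dropLast).vars ∨
      (a ∉ adomF I0 ∧ ∀ u ∈ C.nodes, a ∈ (C.fct u).vars → v <+: u) := by
  obtain ⟨-, B, s, hbody, -, hpar, hfct, -, hfresh⟩ :=
    hC.2.2 v hv fun h => hv₀ (by rw [h]; rfl)
  rw [hfct] at ha
  obtain ⟨x, hx, rfl⟩ := Atom.mem_vars_rename.1 ha
  by_cases hxb : x ∈ (C.rule v).bodyVars
  · rw [TGD.bodyVars_eq_of_body_eq hbody] at hxb
    exact Or.inl (hpar hv₀ ▸ Atom.mem_vars_rename.2 ⟨x, hxb, rfl⟩)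
  · obtain ⟨hI0, hout⟩ := hfresh x (Finset.mem_sdiff.2 ⟨hx, hxb⟩)
    exact Or.inr ⟨hI0, fun u hu hxu => by_contra fun hvu => hout u hu hvu hxu⟩

theorem valid.mem_vars_ancestor_or_fresh (hC : C.valid I0 Th) {b v : List ℕ} (hb : b ≠ [])
    (hbv : b <+: v) (hv : v ∈ C.nodes) {a : ℕ} (ha : a ∈ (C.fct v).vars) :
    a ∈ (C.fct b).vars ∨ ∃ p, b <+: p ∧ p ≠ b ∧ p <+: v ∧ a ∉ adomF I0 ∧
      ∀ u ∈ C.nodes, a ∈ (C.fct u).vars → p <+: u := by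
  obtain ⟨t, rfl⟩ := hbv
  induction t using List.reverseRecOn with
  | nil => exact Or.inl (by simpa using ha)
  | append_singleton t k ih =>
    rw [← List.append_assoc] at hv ha ⊢
    have hpar : (b ++ t ++ [k]).dropLast = b ++ t := List.dropLast_concat
    rcases hC.mem_vars_parent_or_fresh hv (by simp [hb]) ha with ha' | ⟨hI0, hout⟩
    · rw [hpar] at ha'
      rcases ih (hC.2.1 _ hv _ (List.prefix_append _ _)) ha' with h | ⟨p, h₁, h₂, h₃, h₄⟩
      · exact Or.inl h
      · exact Or.inr ⟨p, h₁, h₂, h₃.trans (List.prefix_append _ _), h₄⟩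
    · refine Or.inr ⟨_, List.prefix_append_of_prefix (List.prefix_append _ _), fun h => ?_,
        List.prefix_refl _, hI0, hout⟩
      simpa using congrArg List.length h

/-- The subtree strictly below `n₂` is moved below `n₁`, with all values renamed by `r`;
the first index below `n₁` is shifted by `N` to avoid the existing children of `n₁`. -/
noncomputable def graft (C : LinChase) (n₁ n₂ : List ℕ) (N : ℕ) (r : ℕ → ℕ) : LinChase :=
  open Classical in
  { nodes := (C.nodes.erase n₂).filter (fun v => ¬ n₂ <+: v) ∪
      ((C.nodes.erase n₂).filter (n₂ <+: ·)).image
        fun v => n₁ ++ shiftHead N (v.drop n₂.length)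
    fct := fun u => if h : ∃ t, t ≠ [] ∧ u = n₁ ++ shiftHead N t then
      (C.fct (n₂ ++ h.choose)).rename r else C.fct u
    rule := fun u => if h : ∃ t, t ≠ [] ∧ u = n₁ ++ shiftHead N t then
      C.rule (n₂ ++ h.choose) else C.rule u }

variable {n₁ n₂ : List ℕ} {N : ℕ} {r : ℕ → ℕ}

theorem graft_fct_rule_shiftHead {t : List ℕ} (ht : t ≠ []) :
    (C.graft n₁ n₂ N r).fct (n₁ ++ shiftHead N t) = (C.fct (n₂ ++ t)).rename r ∧
      (C.graft n₁ n₂ N r).rule (n₁ ++ shiftHead N t) = C.rule (n₂ ++ t) := by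
  have h : ∃ t', t' ≠ [] ∧ n₁ ++ shiftHead N t = n₁ ++ shiftHead N t' := ⟨t, ht, rfl⟩
  have hch : h.choose = t :=
    shiftHead_injective N (List.append_cancel_left h.choose_spec.2).symm
  simp only [graft, dif_pos h, hch, and_self]

theorem graft_fct_rule_of_mem (hN : ∀ v ∈ C.nodes, ∀ k ∈ v, k < N) {u : List ℕ}
    (hu : u ∈ C.nodes) :
    (C.graft n₁ n₂ N r).fct u = C.fct u ∧ (C.graft n₁ n₂ N r).rule u = C.rule u := by
  have h : ¬ ∃ t, t ≠ [] ∧ u = n₁ ++ shiftHead N t :=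
    fun ⟨t, ht, he⟩ => ne_append_shiftHead (hN u hu) n₁ ht he
  simp only [graft, dif_neg h, and_self]

theorem mem_graft_nodes {u : List ℕ} : u ∈ (C.graft n₁ n₂ N r).nodes ↔
    (u ∈ C.nodes ∧ ¬ n₂ <+: u) ∨ ∃ t ≠ [], n₂ ++ t ∈ C.nodes ∧ u = n₁ ++ shiftHead N t := by
  simp only [graft, Finset.mem_union, Finset.mem_filter, Finset.mem_image, Finset.mem_erase]
  refine or_congr ⟨fun h => ⟨h.1.2, h.2⟩, fun h => ⟨⟨?_, h.1⟩, h.2⟩⟩ ⟨?_, ?_⟩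
  · rintro rfl
    exact h.2 (List.prefix_refl _)
  · rintro ⟨v, ⟨⟨hne, hv⟩, t, rfl⟩, rfl⟩
    exact ⟨t, by simpa using hne, hv, by simp⟩
  · rintro ⟨t, ht, hv, rfl⟩
    exact ⟨n₂ ++ t, ⟨⟨by simpa using ht, hv⟩, List.prefix_append _ _⟩, by simp⟩

theorem card_graft_nodes_lt (hn₂ : n₂ ∈ C.nodes) :
    (C.graft n₁ n₂ N r).nodes.card < C.nodes.card := by
  classical
  calc (C.graft n₁ n₂ N r).nodes.card
      ≤ ((C.nodes.erase n₂).filter fun v => ¬ n₂ <+: v).card +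
          ((C.nodes.erase n₂).filter (n₂ <+: ·)).card :=
        (Finset.card_union_le _ _).trans (Nat.add_le_add_left Finset.card_image_le _)
    _ = (C.nodes.erase n₂).card := by rw [add_comm, Finset.card_filter_add_card_filter_not]
    _ < C.nodes.card := Finset.card_erase_lt_of_mem hn₂

structure Graftable (C : LinChase) (I0 : Finset Fact) (Th : Finset TGD) (n₁ n₂ : List ℕ)
    (N : ℕ) (r : ℕ → ℕ) : Prop where
  valid : C.valid I0 Th
  mem₁ : n₁ ∈ C.nodes
  mem₂ : n₂ ∈ C.nodes
  ne_nil : n₁ ≠ []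
  prefix₁₂ : n₁ <+: n₂
  ne₁₂ : n₁ ≠ n₂
  bound : ∀ v ∈ C.nodes, ∀ k ∈ v, k < N
  rename_fct : (C.fct n₂).rename r = C.fct n₁
  fix : ∀ a ∉ (C.fct n₂).vars, r a = a

namespace Graftable

theorem ne_nil₂ (h : C.Graftable I0 Th n₁ n₂ N r) : n₂ ≠ [] :=
  fun h' => h.ne_nil (List.prefix_nil.1 (h' ▸ h.prefix₁₂))

theorem not_prefix₂₁ (h : C.Graftable I0 Th n₁ n₂ N r) : ¬ n₂ <+: n₁ :=
  fun h' => h.ne₁₂ (h.prefix₁₂.eq_of_length_le h'.length_le)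

theorem graft_fct_append (h : C.Graftable I0 Th n₁ n₂ N r) (t : List ℕ) :
    (C.graft n₁ n₂ N r).fct (n₁ ++ shiftHead N t) = (C.fct (n₂ ++ t)).rename r := by
  rcases eq_or_ne t [] with rfl | ht
  · simpa [shiftHead, (graft_fct_rule_of_mem h.bound h.mem₁).1] using h.rename_fct.symm
  · exact (graft_fct_rule_shiftHead ht).1

theorem mem_graft_nodes_append (h : C.Graftable I0 Th n₁ n₂ N r) {t : List ℕ}
    (ht : n₂ ++ t ∈ C.nodes) : n₁ ++ shiftHead N t ∈ (C.graft n₁ n₂ N r).nodes := by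
  rcases eq_or_ne t [] with rfl | hne
  · simpa [shiftHead, mem_graft_nodes] using Or.inl ⟨h.mem₁, h.not_prefix₂₁⟩
  · exact mem_graft_nodes.2 (Or.inr ⟨t, hne, ht, rfl⟩)

theorem graft_prefix_closed (h : C.Graftable I0 Th n₁ n₂ N r) {v : List ℕ}
    (hv : v ∈ (C.graft n₁ n₂ N r).nodes) {u : List ℕ} (hu : u <+: v) :
    u ∈ (C.graft n₁ n₂ N r).nodes := by
  rcases mem_graft_nodes.1 hv with ⟨hv, hv₂⟩ | ⟨t, -, ht, rfl⟩
  · exact mem_graft_nodes.2 (Or.inl ⟨h.valid.2.1 v hv u hu, fun h' => hv₂ (h'.trans hu)⟩)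
  · rcases prefix_append_cases hu with hu₁ | ⟨x, hx, rfl⟩
    · exact mem_graft_nodes.2
        (Or.inl ⟨h.valid.2.1 _ h.mem₁ u hu₁, fun h' => h.not_prefix₂₁ (h'.trans hu₁)⟩)
    · obtain ⟨t', ht', rfl⟩ := exists_eq_shiftHead_of_prefix hx
      exact h.mem_graft_nodes_append
        (h.valid.2.1 _ ht _ ((List.prefix_append_right_inj n₂).2 ht'))

theorem not_mem_graft_fct_of_kept (h : C.Graftable I0 Th n₁ n₂ N r) {v : List ℕ}
    (hv : v ∈ C.nodes) (hv₂ : ¬ n₂ <+: v) {a : ℕ} (ha : a ∈ (C.fct v).vars)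
    (hfresh : ∀ u ∈ C.nodes, ¬ v <+: u → a ∉ (C.fct u).vars) {u : List ℕ}
    (hu : u ∈ (C.graft n₁ n₂ N r).nodes) (hvu : ¬ v <+: u) :
    a ∉ ((C.graft n₁ n₂ N r).fct u).vars := by
  rcases mem_graft_nodes.1 hu with ⟨hu, -⟩ | ⟨t, ht, htn, rfl⟩
  · rw [(graft_fct_rule_of_mem h.bound hu).1]
    exact hfresh u hu hvu
  rw [(graft_fct_rule_shiftHead ht).1]
  intro hat
  rcases Atom.mem_vars_rename_of_fix h.rename_fct h.fix hat with ⟨hat, ha₂⟩ | ha₁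
  · by_cases hvt : v <+: n₂ ++ t
    · -- `v` is a strict ancestor of `n₂`, so `a` can only reach `n₂ ++ t` through `n₂`
      have hv₂' : v <+: n₂ :=
        (List.prefix_or_prefix_of_prefix hvt (List.prefix_append n₂ t)).resolve_right hv₂
      rcases h.valid.mem_vars_ancestor_or_fresh h.ne_nil₂ (List.prefix_append n₂ t) htn hat
        with ha₂' | ⟨p, hp₂, hpne, -, -, hpu⟩
      · exact ha₂ ha₂'
      · exact hpne ((hpu v hv ha).trans hv₂' |>.eq_of_length_le hp₂.length_le)
    · exact hfresh _ htn hvt hat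
  · exact hfresh n₁ h.mem₁ (fun h' => hvu (h'.trans (List.prefix_append _ _))) ha₁

theorem not_mem_graft_fct_of_moved (h : C.Graftable I0 Th n₁ n₂ N r) {t : List ℕ}
    (ht : t ≠ []) {a : ℕ} (hfresh : ∀ u ∈ C.nodes, ¬ n₂ ++ t <+: u → a ∉ (C.fct u).vars)
    {u : List ℕ} (hu : u ∈ (C.graft n₁ n₂ N r).nodes) (hvu : ¬ n₁ ++ shiftHead N t <+: u) :
    a ∉ ((C.graft n₁ n₂ N r).fct u).vars := by
  rcases mem_graft_nodes.1 hu with ⟨hu, hu₂⟩ | ⟨t₂, ht₂, ht₂n, rfl⟩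
  · rw [(graft_fct_rule_of_mem h.bound hu).1]
    exact hfresh u hu fun h' => hu₂ ((List.prefix_append n₂ t).trans h')
  rw [(graft_fct_rule_shiftHead ht₂).1]
  intro hat
  rcases Atom.mem_vars_rename_of_fix h.rename_fct h.fix hat with ⟨hat, -⟩ | ha₁
  · refine hfresh _ ht₂n (fun htt => hvu ?_) hat
    exact (List.prefix_append_right_inj n₁).2
      (shiftHead_prefix_shiftHead N ((List.prefix_append_right_inj n₂).1 htt))
  · refine hfresh n₁ h.mem₁ (fun h' => ht ?_) ha₁
    simpa using (h'.trans h.prefix₁₂).length_le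

theorem graft_validAt_of_kept (h : C.Graftable I0 Th n₁ n₂ N r) {v : List ℕ}
    (hv : v ∈ C.nodes) (hv₂ : ¬ n₂ <+: v) (hv₀ : v ≠ []) :
    (C.graft n₁ n₂ N r).ValidAt I0 Th v := by
  obtain ⟨hth, B, s, hbody, hI0, hpar, hfct, hinj, hfresh⟩ := h.valid.2.2 v hv hv₀
  rw [ValidAt, (graft_fct_rule_of_mem h.bound hv).2, (graft_fct_rule_of_mem h.bound hv).1,
    (graft_fct_rule_of_mem h.bound (h.valid.2.1 v hv _ (List.dropLast_prefix v))).1]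
  refine ⟨hth, B, s, hbody, hI0, hpar, hfct, hinj, fun y hy => ⟨(hfresh y hy).1, ?_⟩⟩
  have hy' : s y ∈ (C.fct v).vars :=
    hfct ▸ Atom.mem_vars_rename.2 ⟨y, (Finset.mem_sdiff.1 hy).1, rfl⟩
  exact fun u hu hvu => h.not_mem_graft_fct_of_kept hv hv₂ hy' (hfresh y hy).2 hu hvu

theorem graft_validAt_of_moved (h : C.Graftable I0 Th n₁ n₂ N r) {t : List ℕ} (ht : t ≠ [])
    (htn : n₂ ++ t ∈ C.nodes) : (C.graft n₁ n₂ N r).ValidAt I0 Th (n₁ ++ shiftHead N t) := by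
  obtain ⟨hth, B, s, hbody, -, hpar, hfct, hinj, hfresh⟩ := h.valid.2.2 _ htn (by simp [ht])
  have hfix : ∀ y ∈ (C.rule (n₂ ++ t)).existVars, r (s y) = s y := fun y hy =>
    h.fix _ ((hfresh y hy).2 n₂ h.mem₂ fun h' => ht (by simpa using h'.length_le))
  have hdrop : (n₁ ++ shiftHead N t).dropLast = n₁ ++ shiftHead N t.dropLast := by
    rw [List.dropLast_append_of_ne_nil (by simpa using ht), dropLast_shiftHead]
  rw [ValidAt, (graft_fct_rule_shiftHead ht).2, (graft_fct_rule_shiftHead ht).1, hdrop,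
    h.graft_fct_append]
  refine ⟨hth, B, r ∘ s, hbody, fun h' => absurd h' (by simp [h.ne_nil]), fun _ => ?_,
    by rw [hfct, Atom.rename_rename], hinj.congr fun y hy => (hfix y hy).symm,
    fun y hy => ?_⟩
  · rw [← Atom.rename_rename, hpar (by simp [List.dropLast_append_of_ne_nil ht, h.ne_nil₂]),
      List.dropLast_append_of_ne_nil ht]
  · rw [Function.comp_apply, hfix y hy]
    exact ⟨(hfresh y hy).1,
      fun u hu hvu => h.not_mem_graft_fct_of_moved ht (hfresh y hy).2 hu hvu⟩

theorem graft_valid (h : C.Graftable I0 Th n₁ n₂ N r) : (C.graft n₁ n₂ N r).valid I0 Th := by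
  refine valid_iff.2 ⟨?_, fun v hv u hu => h.graft_prefix_closed hv hu, fun v hv hv₀ => ?_⟩
  · exact mem_graft_nodes.2 (Or.inl ⟨h.valid.1, fun h' => h.ne_nil₂ (List.prefix_nil.1 h')⟩)
  · rcases mem_graft_nodes.1 hv with ⟨hv, hv₂⟩ | ⟨t, ht, htn, rfl⟩
    · exact h.graft_validAt_of_kept hv hv₂ hv₀
    · exact h.graft_validAt_of_moved ht htn

theorem fct_mem_graft_allFacts (h : C.Graftable I0 Th n₁ n₂ N r) {m : List ℕ}
    (hm : m ∈ C.nodes) (hm₀ : m ≠ []) (hm₂ : ¬ n₂ <+: m) :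
    C.fct m ∈ (C.graft n₁ n₂ N r).allFacts I0 :=
  Or.inr ⟨m, mem_graft_nodes.2 (Or.inl ⟨hm, hm₂⟩), hm₀,
    (graft_fct_rule_of_mem h.bound hm).1.symm⟩

theorem rename_fct_mem_graft_allFacts (h : C.Graftable I0 Th n₁ n₂ N r) {t : List ℕ}
    (ht : n₂ ++ t ∈ C.nodes) : (C.fct (n₂ ++ t)).rename r ∈ (C.graft n₁ n₂ N r).allFacts I0 :=
  Or.inr ⟨_, h.mem_graft_nodes_append ht, by simp [h.ne_nil], (h.graft_fct_append t).symm⟩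

end Graftable

theorem valid.mem_vars_of_shared_with_image (hC : C.valid I0 Th) {σ : ℕ → ℕ} {Q : CQ}
    {n n' : List ℕ} (hpar : imageParent (augImage C σ Q) n n') (hn₁ : n₁ ≠ [])
    (hnn₁ : n <+: n₁) (h₁₂ : n₁ <+: n₂) (h₂n' : n₂ <+: n') (hn₂ : n₂ ∈ C.nodes) {a : ℕ}
    (ha₂ : a ∈ (C.fct n₂).vars)
    (ha : a ∈ adomF I0 ∨ ∃ m ∈ imageNodes C σ Q, ¬ n₂ <+: m ∧ a ∈ (C.fct m).vars) :
    a ∈ (C.fct n₁).vars := by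
  rcases hC.mem_vars_ancestor_or_fresh hn₁ h₁₂ hn₂ ha₂ with ha₁ | ⟨p, hp₁, hpne, hp₂, hI0, hpu⟩
  · exact ha₁
  rcases ha with ha | ⟨m, hm, hm₂, ham⟩
  · exact absurd ha hI0
  · have hpn : p ≠ n := fun hpn =>
      hpne (hpn.trans (hnn₁.eq_of_length_le (hpn ▸ hp₁).length_le))
    exact absurd (h₂n'.trans (hpar.prefix_of_lcp_mem (lcp_mem_augImage hm hpar.2.1)
      (hnn₁.trans hp₁) hpn (hp₂.trans h₂n') (hpu m hm.1 ham))) hm₂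

theorem exists_smaller_of_not_tightMatch (hC : C.valid I0 Th) {σ : ℕ → ℕ} {Q : CQ}
    (hm : C.isMatch I0 σ Q) (hnt : ¬ tightMatch C σ Q) :
    ∃ (C' : LinChase) (σ' : ℕ → ℕ), C'.valid I0 Th ∧ C'.isMatch I0 σ' Q ∧
      C'.nodes.card < C.nodes.card := by
  simp only [tightMatch, not_forall, not_not] at hnt
  obtain ⟨n, n', hpar, n₁, hn₁, n₂, hn₂, hn₁₀, hn₂₀, hne, hnn₁, h₁₂, h₂n', -, hrule, hpat,
    hshare⟩ := hnt
  have hrel : (C.fct n₁).rel = (C.fct n₂).rel := by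
    obtain ⟨-, B₁, s₁, -, -, -, h₁, -⟩ := hC.2.2 n₁ hn₁ hn₁₀
    obtain ⟨-, B₂, s₂, -, -, -, h₂, -⟩ := hC.2.2 n₂ hn₂ hn₂₀
    rw [h₁, h₂, hrule]
    rfl
  obtain ⟨r, hr, hfix, hshared⟩ := Atom.exists_rename_of_getElem?_eq_iff hrel hpat hshare
  obtain ⟨N, hN⟩ := (C.nodes.biUnion List.toFinset).exists_nat_subset_range
  have hg : C.Graftable I0 Th n₁ n₂ N r := ⟨hC, hn₁, hn₂, hn₁₀, h₁₂, hne,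
    fun v hv k hk => Finset.mem_range.1 (hN (Finset.mem_biUnion.2 ⟨v, hv, by simpa using hk⟩)),
    hr, hfix⟩
  have hfixF : ∀ F : Fact, (∀ a ∈ F.vars, a ∈ adomF I0 ∨
      ∃ m ∈ imageNodes C σ Q, ¬ n₂ <+: m ∧ a ∈ (C.fct m).vars) → F.rename r = F :=
    fun F hF => Atom.rename_eq_self fun a ha => by
      by_cases ha₂ : a ∈ (C.fct n₂).vars
      · exact hshared a (hC.mem_vars_of_shared_with_image hpar hn₁₀ hnn₁ h₁₂ h₂n' hn₂ ha₂
          (hF a ha)) ha₂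
      · exact hfix a ha₂
  refine ⟨C.graft n₁ n₂ N r, r ∘ σ, hg.graft_valid, fun A hA => ?_, card_graft_nodes_lt hn₂⟩
  rw [← Atom.rename_rename]
  rcases hm A hA with hI | ⟨m, hm, hm₀, hFm⟩
  · rw [hfixF _ fun a ha => Or.inl (mem_adomF.2 ⟨_, hI, ha⟩)]
    exact Or.inl hI
  · by_cases hm₂ : n₂ <+: m
    · obtain ⟨t, rfl⟩ := hm₂
      exact hFm ▸ hg.rename_fct_mem_graft_allFacts hm
    · rw [hFm, hfixF _ fun a ha => Or.inr ⟨m, ⟨hm, hm₀, A, hA, hFm⟩, hm₂, ha⟩]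
      exact hg.fct_mem_graft_allFacts hm hm₀ hm₂

end LinChase

theorem tight_match_exists_general (I0 : Finset Fact) (Th : Finset TGD)
    (C : LinChase) (hC : C.valid I0 Th) (Q : CQ) (σ : ℕ → ℕ)
    (hm : C.isMatch I0 σ Q) :
    ∃ (C' : LinChase) (σ' : ℕ → ℕ),
      C'.valid I0 Th ∧ C'.isMatch I0 σ' Q ∧ tightMatch C' σ' Q := by
  induction hk : C.nodes.card using Nat.strong_induction_on generalizing C σ with
  | _ k ih =>
    by_cases ht : tightMatch C σ Q
    · exact ⟨C, σ, hC, hm, ht⟩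
    · obtain ⟨C', σ', hC', hm', hlt⟩ := C.exists_smaller_of_not_tightMatch hC hm ht
      exact ih _ (hk ▸ hlt) C' hC' σ' hm' rfl

/-- existence of tight matches (Lemma A.1). Let `Σ` be a set of linear TGDs
and `I0` an instance. If a Boolean conjunctive query `Q` has a match `σ` in the final
chase tree of a tree-like chase sequence for `I0` and `Σ`, then there is another
tree-like chase sequence for `I0` and `Σ` with final tree `C'` and a match `σ'` of `Q` in
`C'` which is tight: whenever a node `n` is the image parent of a node `n'` in the
augmented image of `σ'`, the nodes `n` and `n'` are near. -/
theorem tight_match_exists (I0 : Finset Fact) (Th : Finset TGD)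
    (hlin : ∀ τ ∈ Th, τ.linear)
    (C : LinChase) (hC : C.valid I0 Th) (Q : CQ) (σ : ℕ → ℕ)
    (hm : C.isMatch I0 σ Q) :
    ∃ (C' : LinChase) (σ' : ℕ → ℕ),
      C'.valid I0 Th ∧ C'.isMatch I0 σ' Q ∧ tightMatch C' σ' Q :=
  tight_match_exists_general I0 Th C hC Q σ hm

end GTGDPaper
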